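/- arXiv:2202.08390 — 3 statements merged into one kernel-verified Lean document; each statement's English description precedes it below -/
import Mathlib

section
/- Let p_i denote the i-th prime and N'_k = ∏_{i=2}^{k} p_i the k-th odd prime factorial. If n is an odd integer with N'_k ≤ n < N'_{k+1} (for some k ≥ 2), then n/φ(n) ≤ N'_k/φ(N'_k). -/
open Real Finset

/-- `N'_k = ∏_{i=2}^{k} p_i`, the product of the odd primes up to the `k`-th prime
(`Nat.nth Nat.Prime` is 0-indexed, so `p_i = Nat.nth Nat.Prime (i-1)`). -/
noncomputable def oddPrimorial (k : ℕ) : ℕ := ∏ i ∈ Finset.Ico 1 k, Nat.nth Nat.Prime i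

private lemma nth_prime_prime (i : ℕ) : (Nat.nth Nat.Prime i).Prime :=
  Nat.nth_mem_of_infinite Nat.infinite_setOf_prime i

private lemma three_le_nth_prime {i : ℕ} (hi : 1 ≤ i) : 3 ≤ Nat.nth Nat.Prime i := by
  have h := Nat.add_two_le_nth_prime i
  omega

/-- In a finset of `m` odd primes, some element is at least the `m`-th prime. -/
private lemma exists_nth_le (s : Finset ℕ) (hs : ∀ p ∈ s, p.Prime ∧ 3 ≤ p)
    (hne : s.Nonempty) : ∃ p ∈ s, Nat.nth Nat.Prime s.card ≤ p := by
  by_contra hcon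
  push_neg at hcon
  set m := s.card with hm
  have hm1 : 1 ≤ m := Finset.card_pos.mpr hne
  have hinj : Set.InjOn (Nat.count Nat.Prime) s := by
    intro a ha b hb hab
    have h1 := Nat.nth_count (p := Nat.Prime) (hs a ha).1
    have h2 := Nat.nth_count (p := Nat.Prime) (hs b hb).1
    rw [← h1, ← h2, hab]
  have hsub : s.image (Nat.count Nat.Prime) ⊆ Finset.Ico 1 m := by
    intro j hj
    rcases Finset.mem_image.mp hj with ⟨p, hp, rfl⟩
    have hnth : Nat.nth Nat.Prime (Nat.count Nat.Prime p) = p := Nat.nth_count (hs p hp).1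
    refine Finset.mem_Ico.mpr ⟨?_, ?_⟩
    · by_contra h0
      push_neg at h0
      interval_cases (Nat.count Nat.Prime p)
      · have : p = 2 := by
          have := Nat.nth_prime_zero_eq_two
          rw [← hnth]; simpa using this
        have := (hs p hp).2; omega
    · have hlt : p < Nat.nth Nat.Prime m := hcon p hp
      rw [← hnth] at hlt
      exact (Nat.nth_lt_nth Nat.infinite_setOf_prime).mp hlt
  have hcard : m ≤ (Finset.Ico 1 m).card := by
    calc m = s.card := hm
    _ = (s.image (Nat.count Nat.Prime)).card := (Finset.card_image_of_injOn hinj).symm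
    _ ≤ (Finset.Ico 1 m).card := Finset.card_le_card hsub
  simp [Nat.card_Ico] at hcard
  omega

/-- A finset of `m` odd primes has product at least `oddPrimorial (m+1)`. -/
private lemma oddPrimorial_le_prod : ∀ m : ℕ, ∀ s : Finset ℕ, s.card = m →
    (∀ p ∈ s, p.Prime ∧ 3 ≤ p) → oddPrimorial (m + 1) ≤ ∏ p ∈ s, p := by
  intro m
  induction m with
  | zero =>
    intro s hcard _
    rw [Finset.card_eq_zero.mp hcard]
    simp [oddPrimorial]
  | succ m ih =>
    intro s hcard hs
    have hne : s.Nonempty := Finset.card_pos.mp (by omega)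
    obtain ⟨p, hp, hple⟩ := exists_nth_le s hs hne
    rw [hcard] at hple
    have herase : (s.erase p).card = m := by
      rw [Finset.card_erase_of_mem hp, hcard]
      omega
    have hih := ih (s.erase p) herase (fun q hq => hs q (Finset.mem_of_mem_erase hq))
    have hsplit : ∏ q ∈ s, q = p * ∏ q ∈ s.erase p, q :=
      (Finset.mul_prod_erase s id hp).symm
    have htop : oddPrimorial (m + 2) = oddPrimorial (m + 1) * Nat.nth Nat.Prime (m + 1) := by
      unfold oddPrimorial
      rw [Finset.prod_Ico_succ_top (by omega)]
    rw [hsplit, htop, mul_comm (oddPrimorial (m + 1))]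
    exact Nat.mul_le_mul hple hih

private lemma ratio_anti {a b : ℕ} (h3 : 3 ≤ b) (hba : b ≤ a) :
    (a : ℝ) / ((a : ℝ) - 1) ≤ (b : ℝ) / ((b : ℝ) - 1) := by
  have hb : (3 : ℝ) ≤ (b : ℝ) := by exact_mod_cast h3
  have hab : (b : ℝ) ≤ (a : ℝ) := by exact_mod_cast hba
  rw [div_le_div_iff₀ (by linarith) (by linarith)]
  nlinarith

/-- The ratio product over a finset of `m` odd primes is at most that over the first `m`
odd primes. -/
private lemma ratio_prod_le : ∀ m : ℕ, ∀ s : Finset ℕ, s.card = m →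
    (∀ p ∈ s, p.Prime ∧ 3 ≤ p) →
    ∏ p ∈ s, (p : ℝ) / ((p : ℝ) - 1) ≤
      ∏ i ∈ Finset.Ico 1 (m + 1), (Nat.nth Nat.Prime i : ℝ) / ((Nat.nth Nat.Prime i : ℝ) - 1) := by
  intro m
  induction m with
  | zero =>
    intro s hcard _
    rw [Finset.card_eq_zero.mp hcard]
    simp
  | succ m ih =>
    intro s hcard hs
    have hne : s.Nonempty := Finset.card_pos.mp (by omega)
    obtain ⟨p, hp, hple⟩ := exists_nth_le s hs hne
    rw [hcard] at hple
    have herase : (s.erase p).card = m := by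
      rw [Finset.card_erase_of_mem hp, hcard]
      omega
    have hih := ih (s.erase p) herase (fun q hq => hs q (Finset.mem_of_mem_erase hq))
    have hsplit : ∏ q ∈ s, (q : ℝ) / ((q : ℝ) - 1) =
        ((p : ℝ) / ((p : ℝ) - 1)) * ∏ q ∈ s.erase p, (q : ℝ) / ((q : ℝ) - 1) :=
      (Finset.mul_prod_erase s _ hp).symm
    have htop : ∏ i ∈ Finset.Ico 1 (m + 2),
          (Nat.nth Nat.Prime i : ℝ) / ((Nat.nth Nat.Prime i : ℝ) - 1) =
        (∏ i ∈ Finset.Ico 1 (m + 1),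
          (Nat.nth Nat.Prime i : ℝ) / ((Nat.nth Nat.Prime i : ℝ) - 1)) *
        ((Nat.nth Nat.Prime (m + 1) : ℝ) / ((Nat.nth Nat.Prime (m + 1) : ℝ) - 1)) := by
      rw [Finset.prod_Ico_succ_top (by omega)]
    rw [hsplit, htop, mul_comm (∏ i ∈ Finset.Ico 1 (m + 1), _)]
    have hfac : (p : ℝ) / ((p : ℝ) - 1) ≤
        (Nat.nth Nat.Prime (m + 1) : ℝ) / ((Nat.nth Nat.Prime (m + 1) : ℝ) - 1) :=
      ratio_anti (three_le_nth_prime (by omega)) hple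
    have hpos : (0 : ℝ) ≤ ∏ q ∈ s.erase p, (q : ℝ) / ((q : ℝ) - 1) := by
      apply Finset.prod_nonneg
      intro q hq
      have h3 := (hs q (Finset.mem_of_mem_erase hq)).2
      have : (3 : ℝ) ≤ (q : ℝ) := by exact_mod_cast h3
      apply div_nonneg <;> linarith
    have hpos2 : (0 : ℝ) ≤ (Nat.nth Nat.Prime (m + 1) : ℝ) / ((Nat.nth Nat.Prime (m + 1) : ℝ) - 1) := by
      have h3 : (3 : ℝ) ≤ (Nat.nth Nat.Prime (m + 1) : ℝ) := by
        exact_mod_cast three_le_nth_prime (by omega : 1 ≤ m + 1)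
      apply div_nonneg <;> linarith
    exact mul_le_mul hfac hih hpos hpos2

/-- `n / φ(n)` as a product over prime factors. -/
private lemma ratio_eq (n : ℕ) (hn : n ≠ 0) :
    (n : ℝ) / (Nat.totient n : ℝ) = ∏ p ∈ n.primeFactors, (p : ℝ) / ((p : ℝ) - 1) := by
  have key := Nat.totient_mul_prod_primeFactors n
  have hφ : 0 < Nat.totient n := Nat.totient_pos.mpr (Nat.pos_of_ne_zero hn)
  have hcast : (Nat.totient n : ℝ) * ∏ p ∈ n.primeFactors, (p : ℝ) =
      (n : ℝ) * ∏ p ∈ n.primeFactors, ((p : ℝ) - 1) := by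
    have := congrArg (Nat.cast : ℕ → ℝ) key
    push_cast at this
    rw [this]
    congr 1
    apply Finset.prod_congr rfl
    intro p hp
    have h2 : 2 ≤ p := (Nat.prime_of_mem_primeFactors hp).two_le
    push_cast [Nat.cast_sub (by omega : 1 ≤ p)]
    ring
  have hppos : (0 : ℝ) < ∏ p ∈ n.primeFactors, ((p : ℝ) - 1) := by
    apply Finset.prod_pos
    intro p hp
    have h2 : 2 ≤ p := (Nat.prime_of_mem_primeFactors hp).two_le
    have : (2 : ℝ) ≤ (p : ℝ) := by exact_mod_cast h2
    linarith
  rw [Finset.prod_div_distrib]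
  rw [div_eq_div_iff (by exact_mod_cast hφ.ne' : (Nat.totient n : ℝ) ≠ 0) hppos.ne']
  linarith [hcast]

theorem stmt_1 (k : ℕ) (hk : 2 ≤ k) (n : ℕ) (hodd : Odd n)
    (h1 : oddPrimorial k ≤ n) (h2 : n < oddPrimorial (k + 1)) :
    (n : ℝ) / (Nat.totient n : ℝ) ≤
      (oddPrimorial k : ℝ) / (Nat.totient (oddPrimorial k) : ℝ) := by
  have hn0 : n ≠ 0 := by
    rintro rfl
    simp at hodd
  -- prime factors of n are odd primes
  have hops : ∀ p ∈ n.primeFactors, p.Prime ∧ 3 ≤ p := by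
    intro p hp
    have hpp := Nat.prime_of_mem_primeFactors hp
    refine ⟨hpp, ?_⟩
    have hdvd := Nat.dvd_of_mem_primeFactors hp
    have hne2 : p ≠ 2 := by
      rintro rfl
      exact (Nat.not_even_iff_odd.mpr hodd) (even_iff_two_dvd.mpr hdvd)
    have := hpp.two_le
    omega
  set m := n.primeFactors.card with hm
  -- card bound : m + 1 ≤ k
  have hmk : m + 1 ≤ k := by
    by_contra hcon
    push_neg at hcon
    have hk1m : k + 1 ≤ m + 1 := by omega
    have hmono : oddPrimorial (k + 1) ≤ oddPrimorial (m + 1) := by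
      unfold oddPrimorial
      apply Finset.prod_le_prod_of_subset_of_one_le'
      · exact Finset.Ico_subset_Ico le_rfl hk1m
      · intro i _ _
        exact (nth_prime_prime i).one_lt.le
    have hle := oddPrimorial_le_prod m n.primeFactors hm.symm hops
    have hdvd : ∏ p ∈ n.primeFactors, p ≤ n :=
      Nat.le_of_dvd (Nat.pos_of_ne_zero hn0) (Nat.prod_primeFactors_dvd n)
    omega
  -- RHS prime factors
  have hNprimes : ∀ i ∈ Finset.Ico 1 k, (Nat.nth Nat.Prime i).Prime :=
    fun i _ => nth_prime_prime i
  have hinj : Set.InjOn (Nat.nth Nat.Prime) (Finset.Ico 1 k) :=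
    Set.injOn_of_injective (Nat.nth_injective Nat.infinite_setOf_prime)
  have hNeq : oddPrimorial k = ∏ p ∈ (Finset.Ico 1 k).image (Nat.nth Nat.Prime), p := by
    rw [Finset.prod_image (fun a ha b hb => hinj ha hb)]
    rfl
  have hNfac : (oddPrimorial k).primeFactors = (Finset.Ico 1 k).image (Nat.nth Nat.Prime) := by
    rw [hNeq]
    apply Nat.primeFactors_prod
    intro p hp
    rcases Finset.mem_image.mp hp with ⟨i, _, rfl⟩
    exact nth_prime_prime i
  have hN0 : oddPrimorial k ≠ 0 := by
    unfold oddPrimorial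
    exact Finset.prod_ne_zero_iff.mpr (fun i _ => (nth_prime_prime i).pos.ne')
  rw [ratio_eq n hn0, ratio_eq _ hN0, hNfac,
    Finset.prod_image (fun a ha b hb => hinj ha hb)]
  calc ∏ p ∈ n.primeFactors, (p : ℝ) / ((p : ℝ) - 1)
      ≤ ∏ i ∈ Finset.Ico 1 (m + 1),
          (Nat.nth Nat.Prime i : ℝ) / ((Nat.nth Nat.Prime i : ℝ) - 1) :=
        ratio_prod_le m n.primeFactors hm.symm hops
    _ ≤ ∏ i ∈ Finset.Ico 1 k,
          (Nat.nth Nat.Prime i : ℝ) / ((Nat.nth Nat.Prime i : ℝ) - 1) := by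
        rw [← Finset.prod_Ico_consecutive _ (by omega : 1 ≤ m + 1) hmk]
        have hone : (1 : ℝ) ≤ ∏ i ∈ Finset.Ico (m + 1) k,
            (Nat.nth Nat.Prime i : ℝ) / ((Nat.nth Nat.Prime i : ℝ) - 1) := by
          calc (1 : ℝ) = ∏ _i ∈ Finset.Ico (m + 1) k, (1 : ℝ) := by simp
            _ ≤ _ := by
              apply Finset.prod_le_prod (fun i _ => zero_le_one)
              intro i hi
              have h3 : (3 : ℝ) ≤ (Nat.nth Nat.Prime i : ℝ) := by
                exact_mod_cast three_le_nth_prime (le_trans (by omega) (Finset.mem_Ico.mp hi).1)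
              rw [le_div_iff₀ (by linarith)]
              linarith
        have hnn : (0 : ℝ) ≤ ∏ i ∈ Finset.Ico 1 (m + 1),
            (Nat.nth Nat.Prime i : ℝ) / ((Nat.nth Nat.Prime i : ℝ) - 1) := by
          apply Finset.prod_nonneg
          intro i hi
          have h3 : (3 : ℝ) ≤ (Nat.nth Nat.Prime i : ℝ) := by
            exact_mod_cast three_le_nth_prime (Finset.mem_Ico.mp hi).1
          apply div_nonneg <;> linarith
        exact le_mul_of_one_le_right hnn hone
end

section
/- Let N < N' be consecutive odd colossally abundant numbers (i.e., both are odd colossally abundant and no odd colossally abundant number lies strictly between them), and let A, α > 0 be real constants. If α·σ(N)/N ≤ A·log log N and α·σ(N')/N' ≤ A·log log N', then every odd integer n with N ≤ n ≤ N' satisfies α·σ(n)/n ≤ A·log log n. -/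
/-!
For fixed `n`, the ratio `σ(n) / n ^ (1 + e)` is log-linear in `e` with slope `-log n`. For
consecutive odd colossally abundant numbers `N < N'` there is an exponent `e` at which the ratios of
`N` and `N'` tie, and `N` then maximizes `σ(n) / n ^ (1 + e)` over all odd `n ≥ 3`. Otherwise
some `n` beats both on a neighbourhood of `e`; at a nearby exponent avoiding the finitely many ties
among the relevant candidates the maximum is attained uniquely, by a new odd colossally abundant
number, and comparing exponents forces it strictly between `N` and `N'`.

Hence `σ(n) / n ≤ B n ^ e` on `[N, N']` with equality at both ends. In the variable `t = log n`
the bound `B e ^ (e t)` is convex and `A log t` is concave, so the inequality at the endpoints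
propagates to the whole interval.
-/

open Real Finset

/-- Sum of positive divisors of `n`. -/
def sigma (n : ℕ) : ℕ := ∑ d ∈ n.divisors, d

/-- An odd integer `N ≥ 3` is *odd colossally abundant* if there is `ε > 0` such that
`σ(n)/n^(1+ε) < σ(N)/N^(1+ε)` for every odd integer `n ≥ 3` with `n ≠ N`. -/
def OddColossallyAbundant (N : ℕ) : Prop :=
  Odd N ∧ 3 ≤ N ∧ ∃ ε : ℝ, 0 < ε ∧ ∀ n : ℕ, Odd n → 3 ≤ n → n ≠ N →
    (sigma n : ℝ) / (n : ℝ) ^ (1 + ε) < (sigma N : ℝ) / (N : ℝ) ^ (1 + ε)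

open Filter Topology

lemma sigma_pos {m : ℕ} (hm : m ≠ 0) : 0 < sigma m :=
  sum_pos (fun _ hd => Nat.pos_of_mem_divisors hd) (Nat.nonempty_divisors.mpr hm)

lemma sigma_le_mul_one_add_log (k : ℕ) : (sigma k : ℝ) ≤ k * (1 + log k) :=
  calc (sigma k : ℝ) = ∑ d ∈ k.divisors, ((k / d : ℕ) : ℝ) := by
        rw [sigma, Nat.cast_sum, ← Nat.sum_div_divisors k (fun d => (d : ℝ))]
    _ ≤ ∑ d ∈ k.divisors, (k : ℝ) / d := sum_le_sum fun _ _ => Nat.cast_div_le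
    _ ≤ ∑ d ∈ Icc 1 k, (k : ℝ) / d :=
        sum_le_sum_of_subset_of_nonneg
          (fun _ hd => mem_Icc.2 ⟨Nat.pos_of_mem_divisors hd, Nat.divisor_le hd⟩)
          (fun _ _ _ => by positivity)
    _ = k * harmonic k := by
        rw [harmonic_eq_sum_Icc]; push_cast; rw [mul_sum]; simp only [div_eq_mul_inv]
    _ ≤ k * (1 + log k) := by gcongr; exact harmonic_le_one_add_log k

noncomputable def caRatio (n : ℕ) (e : ℝ) : ℝ := (sigma n : ℝ) / (n : ℝ) ^ (1 + e)

def IsOddCAAt (N : ℕ) (ε : ℝ) : Prop :=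
  ∀ n : ℕ, Odd n → 3 ≤ n → n ≠ N → caRatio n ε < caRatio N ε

section caRatio

variable {m n : ℕ}

@[simp]
lemma caRatio_zero (e : ℝ) : caRatio 0 e = 0 := by
  simp [caRatio, sigma]

lemma caRatio_pos (hn : n ≠ 0) (e : ℝ) : 0 < caRatio n e := by
  unfold caRatio
  have := sigma_pos hn
  positivity

lemma continuous_caRatio (n : ℕ) : Continuous (caRatio n) := by
  rcases eq_or_ne n 0 with rfl | hn
  · rw [show caRatio 0 = fun _ => 0 from funext caRatio_zero]
    exact continuous_const
  exact continuous_const.div (continuous_const.rpow (continuous_const.add continuous_id)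
    fun _ => Or.inl (by exact_mod_cast hn)) fun _ => by positivity

lemma antitone_caRatio (n : ℕ) : Antitone (caRatio n) := by
  intro e e' he
  rcases Nat.eq_zero_or_pos n with rfl | hn
  · simp
  have hn1 : (1 : ℝ) ≤ n := by exact_mod_cast hn
  exact div_le_div_of_nonneg_left (by positivity) (by positivity)
    (rpow_le_rpow_of_exponent_le hn1 (by linarith))

lemma caRatio_mul_rpow (hn : n ≠ 0) (e e' : ℝ) :
    caRatio n e' * (n : ℝ) ^ (e' - e) = caRatio n e := by
  have hn0 : (0 : ℝ) < n := by positivity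
  rw [caRatio, caRatio, show 1 + e' = (1 + e) + (e' - e) by ring, rpow_add hn0]
  field_simp

lemma caRatio_lt_caRatio_of_le {M : ℕ} (hmM : m ≤ M) {e e' : ℝ} (he : e ≤ e')
    (h : caRatio m e' < caRatio M e') : caRatio m e < caRatio M e := by
  rcases eq_or_ne m 0 with rfl | hm
  · have hM : M ≠ 0 := by rintro rfl; exact lt_irrefl _ h
    exact caRatio_zero e ▸ caRatio_pos hM e
  rw [← caRatio_mul_rpow hm e e', ← caRatio_mul_rpow (by omega) e e']
  have hm0 : (0 : ℝ) < m := by positivity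
  calc caRatio m e' * (m : ℝ) ^ (e' - e) < caRatio M e' * (m : ℝ) ^ (e' - e) := by gcongr
    _ ≤ caRatio M e' * (M : ℝ) ^ (e' - e) := by
        gcongr
        exact (caRatio_pos (by omega) e').le

lemma log_caRatio (hn : n ≠ 0) (e : ℝ) :
    log (caRatio n e) = log (sigma n) - (1 + e) * log n := by
  have hn0 : (0 : ℝ) < n := by positivity
  have hs : (0 : ℝ) < sigma n := by exact_mod_cast sigma_pos hn
  rw [caRatio, log_div hs.ne' (rpow_pos_of_pos hn0 _).ne', log_rpow hn0]

lemma subsingleton_setOf_caRatio_eq (hm : m ≠ 0) (hn : n ≠ 0) (hmn : m ≠ n) :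
    {e | caRatio m e = caRatio n e}.Subsingleton := by
  intro e₁ h₁ e₂ h₂
  have hlog : log (m : ℝ) ≠ log n := fun h => hmn <| by
    exact_mod_cast log_injOn_pos (Set.mem_Ioi.2 (by positivity : (0 : ℝ) < m))
      (Set.mem_Ioi.2 (by positivity : (0 : ℝ) < n)) h
  have h₁' := congrArg log h₁.out
  have h₂' := congrArg log h₂.out
  rw [log_caRatio hm, log_caRatio hn] at h₁' h₂'
  have : (e₁ - e₂) * (log m - log n) = 0 := by linarith
  simpa [sub_eq_zero, hlog] using this

lemma tendsto_caRatio_atTop {e : ℝ} (he : 0 < e) :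
    Tendsto (fun k : ℕ => caRatio k e) atTop (𝓝 0) := by
  have hlog : Tendsto (fun x : ℝ => (1 + log x) / x ^ e) atTop (𝓝 0) := by
    have h := (tendsto_rpow_neg_atTop he).add (isLittleO_log_rpow_atTop he).tendsto_div_nhds_zero
    rw [zero_add] at h
    refine h.congr' ((eventually_gt_atTop 0).mono fun x hx => ?_)
    rw [rpow_neg hx.le]
    simp only [add_div, one_div]
  refine squeeze_zero' (Eventually.of_forall fun k => ?_)
    ((eventually_gt_atTop 0).mono fun k hk => ?_) (hlog.comp tendsto_natCast_atTop_atTop)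
  · unfold caRatio; positivity
  · have hk0 : (0 : ℝ) < k := by exact_mod_cast hk
    rw [Function.comp_apply, caRatio, rpow_add hk0, rpow_one, div_le_div_iff₀ (by positivity)
      (by positivity)]
    calc (sigma k : ℝ) * (k : ℝ) ^ e ≤ k * (1 + log k) * (k : ℝ) ^ e := by
          gcongr; exact sigma_le_mul_one_add_log k
      _ = (1 + log k) * (k * (k : ℝ) ^ e) := by ring

end caRatio

lemma exists_mem_Ioo_strict_max_caRatio {S : Set ℕ} (hS : 0 ∉ S) {n : ℕ} (hn : n ∈ S)
    {a b : ℝ} (ha : 0 < a) (hab : a < b) :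
    ∃ e ∈ Set.Ioo a b, ∃ m ∈ S, caRatio n e ≤ caRatio m e ∧
      ∀ k ∈ S, k ≠ m → caRatio k e < caRatio m e := by
  have hn0 : n ≠ 0 := fun h => hS (h ▸ hn)
  obtain ⟨M, hM⟩ := eventually_atTop.1 <|
    (tendsto_caRatio_atTop ha).eventually_lt_const (caRatio_pos hn0 b)
  set F : Set ℕ := S ∩ Set.Iic (max M n)
  have hF : F.Finite := (Set.finite_Iic _).inter_of_right S
  set ties : Set ℝ := ⋃ k ∈ F, ⋃ m ∈ F, ⋃ (_ : k ≠ m), {e | caRatio k e = caRatio m e}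
  have hties : ties.Finite := hF.biUnion fun k hk => hF.biUnion fun m hm =>
    Set.finite_iUnion fun hkm => (subsingleton_setOf_caRatio_eq
      (fun h => hS (h ▸ hk.1)) (fun h => hS (h ▸ hm.1)) hkm).finite
  obtain ⟨e, he, he_ties⟩ := ((Set.Ioo_infinite hab).sdiff hties).nonempty
  have hnF : n ∈ F := ⟨hn, Set.mem_Iic.2 (le_max_right _ _)⟩
  obtain ⟨m, hmF, hmax⟩ := Set.exists_max_image F (fun k => caRatio k e) hF ⟨n, hnF⟩
  refine ⟨e, he, m, hmF.1, hmax n hnF, fun k hk hkm => ?_⟩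
  by_cases hkF : k ∈ F
  · refine (hmax k hkF).lt_of_ne fun h => he_ties ?_
    simp only [ties, Set.mem_iUnion]
    exact ⟨k, hkF, m, hmF, hkm, h⟩
  · have hMk : M ≤ k := le_of_max_le_left (not_le.1 fun h => hkF ⟨hk, h⟩).le
    calc caRatio k e ≤ caRatio k a := antitone_caRatio k he.1.le
      _ < caRatio n b := hM k hMk
      _ ≤ caRatio n e := antitone_caRatio n he.2.le
      _ ≤ caRatio m e := hmax n hnF

namespace IsOddCAAt

variable {N m : ℕ} {ε e : ℝ}

lemma lt_of_caRatio_lt (hN : IsOddCAAt N ε) (he : e ≤ ε) (hm : Odd m) (hm3 : 3 ≤ m)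
    (h : caRatio N e < caRatio m e) : N < m := by
  by_contra! hmN
  have hmN' : m ≠ N := by rintro rfl; exact lt_irrefl _ h
  exact lt_asymm h (caRatio_lt_caRatio_of_le hmN he (hN m hm hm3 hmN'))

lemma gt_of_caRatio_lt (hN : IsOddCAAt N ε) (he : ε ≤ e) (hm : Odd m) (hm3 : 3 ≤ m)
    (h : caRatio N e < caRatio m e) : m < N := by
  by_contra! hNm
  have hmN' : m ≠ N := by rintro rfl; exact lt_irrefl _ h
  exact lt_asymm (hN m hm hm3 hmN') (caRatio_lt_caRatio_of_le hNm he h)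

end IsOddCAAt

lemma exists_caRatio_eq_caRatio {N N' : ℕ} {ε ε' : ℝ} (hlt : N < N') (hN : IsOddCAAt N ε)
    (hN' : IsOddCAAt N' ε') (hNodd : Odd N) (hN3 : 3 ≤ N) (hN'odd : Odd N') (hN'3 : 3 ≤ N') :
    ∃ e ∈ Set.Ioo ε' ε, caRatio N e = caRatio N' e := by
  have hε : caRatio N' ε < caRatio N ε := hN N' hN'odd hN'3 hlt.ne'
  have hε' : caRatio N ε' < caRatio N' ε' := hN' N hNodd hN3 hlt.ne
  have hεε' : ε' < ε := not_le.1 fun h => lt_asymm hε (caRatio_lt_caRatio_of_le hlt.le h hε')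
  have hcont : ContinuousOn (fun x => caRatio N x - caRatio N' x) (Set.Icc ε' ε) :=
    ((continuous_caRatio _).sub (continuous_caRatio _)).continuousOn
  obtain ⟨e, he, heq⟩ := intermediate_value_Ioo hεε'.le hcont
    (Set.mem_Ioo.2 ⟨sub_neg.2 hε', sub_pos.2 hε⟩)
  exact ⟨e, he, sub_eq_zero.1 heq⟩

lemma caRatio_le_of_consecutive {N N' : ℕ} {ε ε' e : ℝ} (hN : IsOddCAAt N ε)
    (hN' : IsOddCAAt N' ε') (hε' : 0 < ε') (he : e ∈ Set.Ioo ε' ε)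
    (hcross : caRatio N e = caRatio N' e)
    (hcons : ∀ m : ℕ, N < m → m < N' → ¬ OddColossallyAbundant m)
    {n : ℕ} (hn : Odd n) (hn3 : 3 ≤ n) : caRatio n e ≤ caRatio N e := by
  by_contra! hNn
  set U : Set ℝ :=
    {x | caRatio N x < caRatio n x} ∩ {x | caRatio N' x < caRatio n x} ∩ Set.Ioo ε' ε
  have hU : IsOpen U :=
    ((isOpen_lt (continuous_caRatio _) (continuous_caRatio _)).inter
      (isOpen_lt (continuous_caRatio _) (continuous_caRatio _))).inter isOpen_Ioo
  have heU : e ∈ U := ⟨⟨hNn, show caRatio N' e < caRatio n e by rwa [← hcross]⟩, he⟩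
  obtain ⟨a, b, hab, habU⟩ := mem_nhds_iff_exists_Ioo_subset.1 (hU.mem_nhds heU)
  obtain ⟨x, hx, m, ⟨hm, hm3⟩, hnm, hmax⟩ := exists_mem_Ioo_strict_max_caRatio
    (S := {k | Odd k ∧ 3 ≤ k}) (by simp) ⟨hn, hn3⟩ (hε'.trans he.1) hab.2
  obtain ⟨⟨hNx, hN'x⟩, hxε⟩ := habU ⟨hab.1.trans hx.1, hx.2⟩
  refine hcons m (hN.lt_of_caRatio_lt hxε.2.le hm hm3 (hNx.trans_le hnm))
    (hN'.gt_of_caRatio_lt hxε.1.le hm hm3 (hN'x.trans_le hnm))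
    ⟨hm, hm3, x, hε'.trans hxε.1, fun k hk hk3 hkm => hmax k ⟨hk, hk3⟩ hkm⟩

lemma sigma_div_self_eq_caRatio_mul_rpow {n : ℕ} (hn : n ≠ 0) (e : ℝ) :
    (sigma n : ℝ) / n = caRatio n e * (n : ℝ) ^ e := by
  have hn0 : (0 : ℝ) < n := by positivity
  rw [caRatio, rpow_add hn0, rpow_one]
  field_simp

lemma ConvexOn.le_of_concaveOn {E : Type*} [AddCommGroup E] [Module ℝ E] {s : Set E}
    {f g : E → ℝ} (hf : ConvexOn ℝ s f) (hg : ConcaveOn ℝ s g) {x y z : E} (hx : x ∈ s)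
    (hy : y ∈ s) (hz : z ∈ segment ℝ x y) (hfx : f x ≤ g x) (hfy : f y ≤ g y) :
    f z ≤ g z := by
  have := (hf.sub hg).le_on_segment hx hy hz
  simp only [Pi.sub_apply] at this
  linarith [max_le (sub_nonpos.2 hfx) (sub_nonpos.2 hfy)]

lemma mul_rpow_le_mul_log_log_of_mem_Icc {A B e x y z : ℝ} (hA : 0 ≤ A) (hB : 0 ≤ B)
    (hx : 1 < x) (hz : z ∈ Set.Icc x y) (hbx : B * x ^ e ≤ A * log (log x))
    (hby : B * y ^ e ≤ A * log (log y)) : B * z ^ e ≤ A * log (log z) := by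
  have hx0 : 0 < x := by linarith
  have hz0 : 0 < z := hx0.trans_le hz.1
  have hy : 1 < y := by linarith [hz.1, hz.2]
  have hexp : ConvexOn ℝ (Set.Ioi 0) fun t => B * exp (t * e) :=
    (((convexOn_exp.comp_linearMap (LinearMap.mulRight ℝ e)).subset (Set.subset_univ _)
      (convex_Ioi 0)).smul hB)
  have hlog : ConcaveOn ℝ (Set.Ioi 0) fun t => A * log t :=
    strictConcaveOn_log_Ioi.concaveOn.smul hA
  have hpow : ∀ t : ℝ, 0 < t → t ^ e = exp (log t * e) := fun t ht => rpow_def_of_pos ht e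
  rw [hpow x hx0] at hbx
  rw [hpow y (by linarith)] at hby
  rw [hpow z hz0]
  exact hexp.le_of_concaveOn hlog (log_pos hx) (log_pos hy)
    (by rw [segment_eq_Icc (log_le_log hx0 (hz.1.trans hz.2))]
        exact ⟨log_le_log hx0 hz.1, log_le_log hz0 hz.2⟩) hbx hby

theorem stmt_8 (N N' : ℕ) (hlt : N < N')
    (hN : OddColossallyAbundant N) (hN' : OddColossallyAbundant N')
    (hcons : ∀ m : ℕ, N < m → m < N' → ¬ OddColossallyAbundant m)
    (A α : ℝ) (hA : 0 < A) (hα : 0 < α)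
    (h1 : α * ((sigma N : ℝ) / N) ≤ A * log (log N))
    (h2 : α * ((sigma N' : ℝ) / N') ≤ A * log (log N')) :
    ∀ n : ℕ, Odd n → N ≤ n → n ≤ N' →
      α * ((sigma n : ℝ) / n) ≤ A * log (log n) := by
  obtain ⟨hNodd, hN3, ε, -, hNε⟩ := hN
  obtain ⟨hN'odd, hN'3, ε', hε', hN'ε'⟩ := hN'
  obtain ⟨e, he, hcross⟩ := exists_caRatio_eq_caRatio hlt hNε hN'ε' hNodd hN3 hN'odd hN'3
  intro n hn hNn hnN'
  have hN1 : (1 : ℝ) < N := by exact_mod_cast (by omega : 1 < N)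
  rw [sigma_div_self_eq_caRatio_mul_rpow (by omega) e] at h1 h2 ⊢
  rw [← hcross] at h2
  calc α * (caRatio n e * (n : ℝ) ^ e) ≤ α * caRatio N e * (n : ℝ) ^ e := by
        rw [← mul_assoc]
        gcongr
        exact caRatio_le_of_consecutive hNε hN'ε' hε' he hcross hcons hn (by omega)
    _ ≤ A * log (log n) :=
        mul_rpow_le_mul_log_log_of_mem_Icc (y := N') hA.le
          (mul_pos hα (caRatio_pos (by omega) e)).le hN1
          ⟨Nat.cast_le.2 hNn, Nat.cast_le.2 hnN'⟩ (by linarith) (by linarith)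
end

section
/- Let N' be an odd colossally abundant number and let B, β > 0 be real constants. If β·σ(N')/N' ≤ B/(log log N'), then every odd integer n with 3 ≤ n ≤ N' satisfies β·σ(n)/n ≤ B/(log log n). -/
open Real Finset

theorem stmt_9 (N' : ℕ) (hN' : OddColossallyAbundant N')
    (B β : ℝ) (hB : 0 < B) (hβ : 0 < β)
    (h : β * ((sigma N' : ℝ) / N') ≤ B / log (log N')) :
    ∀ n : ℕ, Odd n → 3 ≤ n → n ≤ N' →
      β * ((sigma n : ℝ) / n) ≤ B / log (log n) := by
  obtain ⟨hOdd, hN3, ε, hε, hCA⟩ := hN'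
  intro n hn hn3 hnle
  have hn0 : (0:ℝ) < n := by exact_mod_cast lt_of_lt_of_le (by norm_num) hn3
  have hN0 : (0:ℝ) < N' := by exact_mod_cast lt_of_lt_of_le (by norm_num) hN3
  have hnN : (n:ℝ) ≤ N' := by exact_mod_cast hnle
  -- log log bounds
  have hlog1 : ∀ m : ℕ, 3 ≤ m → (1:ℝ) < log m := by
    intro m hm
    have hm0 : (0:ℝ) < m := by exact_mod_cast lt_of_lt_of_le (by norm_num) hm
    rw [show (1:ℝ) = log (exp 1) by simp]
    apply Real.log_lt_log (exp_pos 1)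
    calc Real.exp 1 < 2.7182818286 := Real.exp_one_lt_d9
      _ ≤ (m:ℝ) := by
          have : (3:ℝ) ≤ m := by exact_mod_cast hm
          linarith
  have hlln : 0 < log (log n) := Real.log_pos (hlog1 n hn3)
  have hllN : 0 < log (log N') := Real.log_pos (hlog1 N' hN3)
  have hmonolog : log (log n) ≤ log (log N') := by
    have h1 : log n ≤ log N' := Real.log_le_log hn0 hnN
    exact Real.log_le_log (lt_trans one_pos (hlog1 n hn3)) h1
  have hdiv : B / log (log N') ≤ B / log (log n) :=
    div_le_div_of_nonneg_left hB.le hlln hmonolog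
  -- ratio bound
  have key : (sigma n : ℝ)/n ≤ (sigma N' : ℝ)/N' := by
    rcases eq_or_ne n N' with rfl | hne
    · exact le_refl _
    · have hlt := hCA n hn hn3 hne
      have hnε : (0:ℝ) < (n:ℝ)^ε := rpow_pos_of_pos hn0 ε
      have hNε : (0:ℝ) < (N':ℝ)^ε := rpow_pos_of_pos hN0 ε
      have e1 : (sigma n : ℝ)/n = (sigma n : ℝ)/(n:ℝ)^(1+ε) * (n:ℝ)^ε := by
        rw [Real.rpow_add hn0, Real.rpow_one]; field_simp
      have e2 : (sigma N' : ℝ)/N' = (sigma N' : ℝ)/(N':ℝ)^(1+ε) * (N':ℝ)^ε := by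
        rw [Real.rpow_add hN0, Real.rpow_one]; field_simp
      rw [e1, e2]
      have hmono : (n:ℝ)^ε ≤ (N':ℝ)^ε := Real.rpow_le_rpow hn0.le hnN hε.le
      have hσN : 0 ≤ (sigma N' : ℝ)/(N':ℝ)^(1+ε) := by positivity
      exact mul_le_mul hlt.le hmono hnε.le hσN
  calc β * ((sigma n : ℝ)/n) ≤ β * ((sigma N' : ℝ)/N') := by
        exact mul_le_mul_of_nonneg_left key hβ.le
    _ ≤ B / log (log N') := h
    _ ≤ B / log (log n) := hdiv
end
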